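/- Let G = (V, E) be a directed graph on a finite vertex set V with |V| = K, let π : V → ℝ be a probability distribution on V, and let c > 0 be a constant. Then Σ_{i∈V} π(i) / (c + π(i) + Σ_{j : (j→i)∈E} π(j)) ≤ 2·α(G)·log(1 + (⌈K²/c⌉ + K)/α(G)) + 2, where α(G) is the independence number of G and ⌈·⌉ is the ceiling function. -/

import Mathlib

/-!
Discretize `π`: with `M = ⌈K² / c⌉`, the integer weights `w i = ⌈M π i⌉` on the support of `π`
dominate every term, `π i / (c + π i + ∑_{j → i} π j) ≤ w i / (w i + ∑_{j → i} w j)`, and have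
total weight `W ≤ M + K`.

For weights `w ≥ 1`, the weighted Caro–Wei bound `∑ w i / w(N[i]) ≤ α` for closed neighbourhoods
in the underlying undirected graph, Cauchy–Schwarz, and double counting of edges give a vertex
whose closed in-neighbourhood has weight at least `(W + α) / (2α)`. Removing it costs at most
`2α w_v / (W + α) ≤ 2α (log (1 + W/α) - log (1 + (W - w_v)/α))`, which telescopes to
`2α log (1 + W/α)`.
-/

open Finset

/-- `s` is an independent set of the directed graph with edge relation `E`:
for all distinct `i, j ∈ s`, neither `i → j` nor `j → i` is an edge. -/
def DirIsIndepSet {V : Type*} (E : V → V → Prop) (s : Finset V) : Prop :=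
  ∀ i ∈ s, ∀ j ∈ s, i ≠ j → ¬ E i j ∧ ¬ E j i

/-- The independence number of a directed graph: the maximum cardinality of an
independent set. -/
noncomputable def dirIndepNum (V : Type*) [Fintype V] (E : V → V → Prop) : ℕ :=
  sSup {n | ∃ s : Finset V, DirIsIndepSet E s ∧ s.card = n}

section

variable {V : Type*}

lemma DirIsIndepSet.insert [DecidableEq V] {E : V → V → Prop} {T : Finset V} {v : V}
    (hT : DirIsIndepSet E T) (hv : ∀ j ∈ T, ¬ E v j ∧ ¬ E j v) :
    DirIsIndepSet E (insert v T) := by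
  intro i hi j hj hij
  simp only [mem_insert] at hi hj
  rcases hi with rfl | hi <;> rcases hj with rfl | hj
  · exact absurd rfl hij
  · exact hv j hj
  · exact (hv i hi).symm
  · exact hT i hi j hj hij

lemma card_le_dirIndepNum [Fintype V] {E : V → V → Prop} {T : Finset V}
    (hT : DirIsIndepSet E T) : T.card ≤ dirIndepNum V E :=
  le_csSup ⟨Fintype.card V, by rintro _ ⟨s, -, rfl⟩; exact s.card_le_univ⟩ ⟨T, hT, rfl⟩

lemma one_le_dirIndepNum [Fintype V] [Nonempty V] (E : V → V → Prop) : 1 ≤ dirIndepNum V E := by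
  obtain ⟨v⟩ := ‹Nonempty V›
  simpa using card_le_dirIndepNum (E := E) (T := {v}) (by simp [DirIsIndepSet])

lemma sum_mul_sum_filter_comm {R : Type*} [CommSemiring R] (r : V → V → Prop) [DecidableRel r]
    (s : Finset V) (f g : V → R) :
    ∑ i ∈ s, f i * ∑ j ∈ s with r i j, g j = ∑ j ∈ s, g j * ∑ i ∈ s with r i j, f i := by
  simp_rw [mul_sum, sum_filter]
  rw [sum_comm]
  exact sum_congr rfl fun _ _ => sum_congr rfl fun _ _ => by split_ifs <;> ring

lemma div_add_log_one_add_div_le {a x y : ℝ} (ha : 0 < a) (hx : 0 ≤ x) (hy : 0 ≤ y) :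
    x / (y + x + a) + Real.log (1 + y / a) ≤ Real.log (1 + (y + x) / a) := by
  have h₁ : 0 < 1 + y / a := by positivity
  have h₂ : 0 < 1 + (y + x) / a := by positivity
  have key := Real.one_sub_inv_le_log_of_pos (div_pos h₂ h₁)
  rw [Real.log_div h₂.ne' h₁.ne', inv_div] at key
  have e : 1 - (1 + y / a) / (1 + (y + x) / a) = x / (y + x + a) := by
    field_simp
    ring
  linarith

section Weights

variable (E : V → V → Prop) [DecidableRel E] (w : V → ℝ)

/-- The `w`-weight of the closed neighbourhood of `i` within `s` in the undirected graph
underlying `E`. -/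
def nbhdWeight [DecidableEq V] (s : Finset V) (i : V) : ℝ :=
  w i + ∑ j ∈ s with j ≠ i ∧ (E i j ∨ E j i), w j

def inWeight (s : Finset V) (i : V) : ℝ :=
  w i + ∑ j ∈ s with E j i, w j

variable {E w} {s t : Finset V}

lemma nbhdWeight_pos [DecidableEq V] {i : V} (hw : ∀ j ∈ s, 0 ≤ w j) (hi : 0 < w i) :
    0 < nbhdWeight E w s i :=
  add_pos_of_pos_of_nonneg hi (sum_nonneg fun j hj => hw j (mem_filter.mp hj).1)

lemma inWeight_pos {i : V} (hw : ∀ j ∈ s, 0 ≤ w j) (hi : 0 < w i) : 0 < inWeight E w s i :=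
  add_pos_of_pos_of_nonneg hi (sum_nonneg fun j hj => hw j (mem_filter.mp hj).1)

lemma nbhdWeight_mono [DecidableEq V] (i : V) (hw : ∀ j ∈ t, 0 ≤ w j) (hst : s ⊆ t) :
    nbhdWeight E w s i ≤ nbhdWeight E w t i :=
  add_le_add le_rfl <| sum_le_sum_of_subset_of_nonneg (filter_subset_filter _ hst)
    fun j hj _ => hw j (mem_filter.mp hj).1

lemma inWeight_mono (i : V) (hw : ∀ j ∈ t, 0 ≤ w j) (hst : s ⊆ t) :
    inWeight E w s i ≤ inWeight E w t i :=
  add_le_add le_rfl <| sum_le_sum_of_subset_of_nonneg (filter_subset_filter _ hst)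
    fun j hj _ => hw j (mem_filter.mp hj).1

lemma nbhdWeight_le_inWeight_add [DecidableEq V] (hw : ∀ j ∈ s, 0 ≤ w j) (i : V) :
    nbhdWeight E w s i ≤ inWeight E w s i + ∑ j ∈ s with E i j, w j := by
  rw [nbhdWeight, inWeight, add_assoc, sum_filter, sum_filter, sum_filter, ← sum_add_distrib]
  refine add_le_add le_rfl (sum_le_sum fun j hj => ?_)
  have := hw j hj
  split_ifs <;> first | linarith | tauto

/-- Weighted Caro–Wei inequality: take a vertex of minimal `nbhdWeight` into `T`, delete its
closed neighbourhood and induct. -/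
theorem exists_dirIsIndepSet_sum_div_nbhdWeight_le [DecidableEq V] (hw : ∀ i ∈ s, 0 < w i) :
    ∃ T ⊆ s, DirIsIndepSet E T ∧ ∑ i ∈ s, w i / nbhdWeight E w s i ≤ T.card := by
  induction s using Finset.strongInduction with
  | H s ih =>
  rcases s.eq_empty_or_nonempty with rfl | hne
  · exact ⟨∅, subset_rfl, by simp [DirIsIndepSet], by simp⟩
  have hw₀ : ∀ i ∈ s, 0 ≤ w i := fun i hi => (hw i hi).le
  obtain ⟨v, hv, hmin⟩ := s.exists_min_image (nbhdWeight E w s) hne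
  set N := insert v {j ∈ s | j ≠ v ∧ (E v j ∨ E j v)}
  have hNs : N ⊆ s := insert_subset hv (filter_subset _ _)
  obtain ⟨T, hTs, hT, hsum⟩ := ih (s \ N) (sdiff_ssubset hNs ⟨v, mem_insert_self _ _⟩)
    fun i hi => hw i (mem_sdiff.mp hi).1
  have hvT : v ∉ T := fun h => (mem_sdiff.mp (hTs h)).2 (mem_insert_self _ _)
  have hN : ∑ i ∈ N, w i / nbhdWeight E w s i ≤ 1 := by
    have hv₀ := nbhdWeight_pos hw₀ (hw v hv) (E := E)
    calc ∑ i ∈ N, w i / nbhdWeight E w s i ≤ ∑ i ∈ N, w i / nbhdWeight E w s v :=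
          sum_le_sum fun i hi => div_le_div_of_nonneg_left (hw₀ i (hNs hi)) hv₀ (hmin i (hNs hi))
      _ = 1 := by
          rw [← sum_div, sum_insert (by simp), div_eq_one_iff_eq hv₀.ne']
          rfl
  have hrest : ∑ i ∈ s \ N, w i / nbhdWeight E w s i ≤ T.card :=
    (sum_le_sum fun i hi => div_le_div_of_nonneg_left (hw₀ i (mem_sdiff.mp hi).1)
      (nbhdWeight_pos (fun j hj => hw₀ j (mem_sdiff.mp hj).1) (hw i (mem_sdiff.mp hi).1))
      (nbhdWeight_mono i hw₀ sdiff_subset)).trans hsum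
  refine ⟨insert v T, insert_subset hv (hTs.trans sdiff_subset), hT.insert fun j hj => ?_, ?_⟩
  · obtain ⟨hjs, hjN⟩ := mem_sdiff.mp (hTs hj)
    simp only [N, mem_insert, mem_filter, not_or, not_and] at hjN
    exact hjN.2 hjs hjN.1
  · rw [← sum_sdiff hNs, card_insert_of_notMem hvT]
    push_cast
    linarith

lemma sum_mul_nbhdWeight_le [DecidableEq V] (hw : ∀ i ∈ s, 0 ≤ w i) {D : ℝ}
    (hD : ∀ i ∈ s, inWeight E w s i ≤ D) :
    ∑ i ∈ s, w i * nbhdWeight E w s i ≤ 2 * (∑ i ∈ s, w i) * D - ∑ i ∈ s, w i ^ 2 := by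
  have hout : ∑ i ∈ s, w i * ∑ j ∈ s with E i j, w j
      = ∑ i ∈ s, w i * (inWeight E w s i - w i) := by
    simp only [inWeight, add_sub_cancel_left]
    exact sum_mul_sum_filter_comm E s w w
  calc ∑ i ∈ s, w i * nbhdWeight E w s i
      ≤ ∑ i ∈ s, w i * (inWeight E w s i + ∑ j ∈ s with E i j, w j) :=
        sum_le_sum fun i hi => mul_le_mul_of_nonneg_left (nbhdWeight_le_inWeight_add hw i) (hw i hi)
    _ = ∑ i ∈ s, w i * (2 * inWeight E w s i - w i) := by
        simp_rw [mul_add, sum_add_distrib, hout, ← sum_add_distrib]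
        exact sum_congr rfl fun i _ => by ring
    _ ≤ ∑ i ∈ s, w i * (2 * D - w i) :=
        sum_le_sum fun i hi => mul_le_mul_of_nonneg_left (by linarith [hD i hi]) (hw i hi)
    _ = ∑ i ∈ s, (2 * D * w i - w i ^ 2) := sum_congr rfl fun i _ => by ring
    _ = 2 * (∑ i ∈ s, w i) * D - ∑ i ∈ s, w i ^ 2 := by
        rw [sum_sub_distrib, ← mul_sum]
        ring

variable {a : ℝ}

lemma exists_add_div_two_mul_le_inWeight (ha : 0 < a)
    (hα : ∀ T, DirIsIndepSet E T → (T.card : ℝ) ≤ a) (hne : s.Nonempty) (hw : ∀ i ∈ s, 1 ≤ w i) :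
    ∃ i ∈ s, (∑ j ∈ s, w j + a) / (2 * a) ≤ inWeight E w s i := by
  classical
  obtain ⟨i, hi, hmax⟩ := s.exists_max_image (inWeight E w s) hne
  refine ⟨i, hi, ?_⟩
  set W := ∑ j ∈ s, w j
  have hw₀ : ∀ j ∈ s, 0 < w j := fun j hj => one_pos.trans_le (hw j hj)
  have hb : ∀ j ∈ s, 0 < nbhdWeight E w s j :=
    fun j hj => nbhdWeight_pos (fun k hk => (hw₀ k hk).le) (hw₀ j hj)
  obtain ⟨T, -, hT, hcw⟩ := exists_dirIsIndepSet_sum_div_nbhdWeight_le hw₀ (E := E)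
  have hW : 0 < W := sum_pos hw₀ hne
  have hsq : W ≤ ∑ j ∈ s, w j ^ 2 := sum_le_sum fun j hj => by nlinarith [hw j hj]
  have hWD : W ^ 2 ≤ a * (2 * W * inWeight E w s i - W) :=
    calc W ^ 2 ≤ (∑ j ∈ s, w j / nbhdWeight E w s j) * ∑ j ∈ s, w j * nbhdWeight E w s j :=
          sum_sq_le_sum_mul_sum_of_sq_le_mul s (fun j hj => (div_pos (hw₀ j hj) (hb j hj)).le)
            (fun j hj => (mul_pos (hw₀ j hj) (hb j hj)).le)
            fun j hj => le_of_eq (by field_simp [(hb j hj).ne'])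
      _ ≤ a * (2 * W * inWeight E w s i - ∑ j ∈ s, w j ^ 2) :=
        mul_le_mul (hcw.trans (hα T hT)) (sum_mul_nbhdWeight_le (fun j hj => (hw₀ j hj).le) hmax)
          (sum_nonneg fun j hj => (mul_pos (hw₀ j hj) (hb j hj)).le) ha.le
      _ ≤ a * (2 * W * inWeight E w s i - W) := by gcongr
  have : W ≤ a * (2 * inWeight E w s i - 1) := le_of_mul_le_mul_left (by nlinarith) hW
  rw [div_le_iff₀ (by positivity)]
  linarith

theorem sum_div_inWeight_le_two_mul_log (ha : 0 < a)
    (hα : ∀ T, DirIsIndepSet E T → (T.card : ℝ) ≤ a) (hw : ∀ i ∈ s, 1 ≤ w i) :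
    ∑ i ∈ s, w i / inWeight E w s i ≤ 2 * a * Real.log (1 + (∑ i ∈ s, w i) / a) := by
  classical
  induction s using Finset.strongInduction with
  | H s ih =>
  rcases s.eq_empty_or_nonempty with rfl | hne
  · simp
  have hw₀ : ∀ i ∈ s, 0 ≤ w i := fun i hi => zero_le_one.trans (hw i hi)
  obtain ⟨v, hv, hD⟩ := exists_add_div_two_mul_le_inWeight ha hα hne hw
  set W' := ∑ i ∈ s.erase v, w i
  have hW' : 0 ≤ W' := sum_nonneg fun i hi => hw₀ i (mem_of_mem_erase hi)
  have hwv : 0 ≤ w v := hw₀ v hv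
  have hw' : ∀ i ∈ s.erase v, 1 ≤ w i := fun i hi => hw i (mem_of_mem_erase hi)
  have hrest : ∑ i ∈ s.erase v, w i / inWeight E w s i ≤ 2 * a * Real.log (1 + W' / a) :=
    (sum_le_sum fun i hi => div_le_div_of_nonneg_left (zero_le_one.trans (hw' i hi))
      (inWeight_pos (fun j hj => zero_le_one.trans (hw' j hj)) (one_pos.trans_le (hw' i hi)))
      (inWeight_mono i hw₀ (erase_subset v s))).trans
    (ih _ (erase_ssubset hv) hw')
  have hv' : w v / inWeight E w s v ≤ 2 * a * (w v / (W' + w v + a)) := by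
    rw [← sum_erase_add s w hv] at hD
    calc w v / inWeight E w s v ≤ w v / ((W' + w v + a) / (2 * a)) :=
          div_le_div_of_nonneg_left hwv (by positivity) hD
      _ = 2 * a * (w v / (W' + w v + a)) := by field_simp
  rw [← sum_erase_add s _ hv, ← sum_erase_add s w hv]
  calc ∑ i ∈ s.erase v, w i / inWeight E w s i + w v / inWeight E w s v
      ≤ 2 * a * (w v / (W' + w v + a) + Real.log (1 + W' / a)) := by linarith
    _ ≤ 2 * a * Real.log (1 + (W' + w v) / a) :=
        mul_le_mul_of_nonneg_left (div_add_log_one_add_div_le ha hwv hW') (by positivity)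

end Weights

section Discretization

variable {π w : V → ℝ} {M : ℝ}

lemma sum_le_mul_sum_add_card (s : Finset V) (hw : ∀ i ∈ s, w i ≤ π i * M + 1) :
    ∑ i ∈ s, w i ≤ M * ∑ i ∈ s, π i + s.card :=
  calc ∑ i ∈ s, w i ≤ ∑ i ∈ s, (π i * M + 1) := sum_le_sum hw
    _ = M * ∑ i ∈ s, π i + s.card := by
        rw [sum_add_distrib, ← sum_mul, sum_const, nsmul_one, mul_comm]

variable [Fintype V] (E : V → V → Prop) [DecidableRel E] {c : ℝ}

lemma div_le_div_inWeight_of_discretization (hπ : ∀ i, 0 ≤ π i) (hc : 0 < c)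
    (hcM : (Fintype.card V : ℝ) + 1 ≤ M * c) {s : Finset V} (hs : ∀ i ∈ s, 0 < π i)
    (hw_ge : ∀ i ∈ s, π i * M ≤ w i) (hw_le : ∀ i ∈ s, w i ≤ π i * M + 1) {i : V} (hi : i ∈ s) :
    π i / (c + π i + ∑ j ∈ univ with E j i, π j) ≤ w i / inWeight E w s i := by
  set P := c + π i + ∑ j ∈ univ with E j i, π j
  have hM : 0 < M := by nlinarith
  have hwpos : ∀ j ∈ s, 0 < w j := fun j hj => (mul_pos (hs j hj) hM).trans_le (hw_ge j hj)
  have hP : 0 < P := by linarith [sum_nonneg fun j (_ : j ∈ univ.filter (E · i)) => hπ j, hπ i]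
  have hB := inWeight_pos (fun j hj => (hwpos j hj).le) (hwpos i hi) (E := E)
  have hBP : inWeight E w s i ≤ M * P := by
    have hin := sum_le_mul_sum_add_card (s.filter (E · i)) fun j hj => hw_le j (mem_filter.mp hj).1
    have hsub : ∑ j ∈ s with E j i, π j ≤ ∑ j ∈ univ with E j i, π j :=
      sum_le_sum_of_subset_of_nonneg (filter_subset_filter _ (subset_univ s)) fun j _ _ => hπ j
    have hcard : ((s.filter (E · i)).card : ℝ) ≤ Fintype.card V := by
      exact_mod_cast card_le_univ _
    rw [inWeight]
    nlinarith [hw_le i hi]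
  rw [div_le_div_iff₀ hP hB]
  calc π i * inWeight E w s i ≤ π i * M * P := by
        rw [mul_assoc]
        exact mul_le_mul_of_nonneg_left hBP (hπ i)
    _ ≤ w i * P := mul_le_mul_of_nonneg_right (hw_ge i hi) hP.le

lemma sum_div_le_card (hπ : ∀ i, 0 ≤ π i) (hc : 0 < c) :
    ∑ i, π i / (c + π i + ∑ j ∈ univ with E j i, π j) ≤ Fintype.card V := by
  have hterm : ∀ i, π i / (c + π i + ∑ j ∈ univ with E j i, π j) ≤ 1 := fun i => by
    have := sum_nonneg fun j (_ : j ∈ univ.filter (E · i)) => hπ j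
    exact div_le_one_of_le₀ (by linarith) (by linarith [hπ i])
  simpa using sum_le_card_nsmul univ _ 1 fun i _ => hterm i

theorem sum_div_le_two_mul_log (hπ : ∀ i, 0 ≤ π i) (hsum : ∑ i, π i ≤ 1) (hc : 0 < c)
    (hcM : (Fintype.card V : ℝ) + 1 ≤ M * c) {a : ℝ} (ha : 0 < a)
    (hα : ∀ T, DirIsIndepSet E T → (T.card : ℝ) ≤ a) :
    ∑ i, π i / (c + π i + ∑ j ∈ univ with E j i, π j)
      ≤ 2 * a * Real.log (1 + (M + Fintype.card V) / a) := by
  have hM : 0 < M := by nlinarith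
  set w : V → ℝ := fun i => ((⌈π i * M⌉ : ℤ) : ℝ)
  set s := univ.filter (fun i => 0 < π i)
  have hs : ∀ i ∈ s, 0 < π i := fun i hi => (mem_filter.mp hi).2
  have hw_le : ∀ i ∈ s, w i ≤ π i * M + 1 := fun i _ => (Int.ceil_lt_add_one _).le
  have hw1 : ∀ i ∈ s, 1 ≤ w i := fun i hi =>
    Int.cast_one (R := ℝ) ▸ Int.cast_le.mpr (Int.one_le_ceil_iff.mpr (mul_pos (hs i hi) hM))
  have hW : ∑ i ∈ s, w i ≤ M + Fintype.card V := by
    have hπs : ∑ i ∈ s, π i ≤ 1 :=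
      (sum_le_sum_of_subset_of_nonneg (subset_univ s) fun i _ _ => hπ i).trans hsum
    have hcard : (s.card : ℝ) ≤ Fintype.card V := by exact_mod_cast card_le_univ s
    nlinarith [sum_le_mul_sum_add_card s hw_le]
  calc ∑ i, π i / (c + π i + ∑ j ∈ univ with E j i, π j)
      = ∑ i ∈ s, π i / (c + π i + ∑ j ∈ univ with E j i, π j) := by
        refine (sum_subset (subset_univ s) fun i _ hi => ?_).symm
        rw [le_antisymm (not_lt.mp fun h => hi (mem_filter.mpr ⟨mem_univ i, h⟩)) (hπ i), zero_div]
    _ ≤ ∑ i ∈ s, w i / inWeight E w s i := sum_le_sum fun i hi =>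
        div_le_div_inWeight_of_discretization E hπ hc hcM hs (fun i _ => Int.le_ceil _) hw_le hi
    _ ≤ 2 * a * Real.log (1 + (∑ i ∈ s, w i) / a) := sum_div_inWeight_le_two_mul_log ha hα hw1
    _ ≤ 2 * a * Real.log (1 + (M + Fintype.card V) / a) := by
        have : 0 ≤ ∑ i ∈ s, w i := sum_nonneg fun i hi => zero_le_one.trans (hw1 i hi)
        gcongr

end Discretization

end

theorem stmt2 {V : Type*} [Fintype V] (E : V → V → Prop) [DecidableRel E]
    (K : ℕ) (hK : Fintype.card V = K)
    (π : V → ℝ) (hnn : ∀ i, 0 ≤ π i) (hsum : ∑ i, π i = 1)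
    (c : ℝ) (hc : 0 < c) :
    ∑ i, π i / (c + π i + ∑ j ∈ univ.filter (fun j => E j i), π j)
      ≤ 2 * (dirIndepNum V E : ℝ) *
          Real.log (1 + ((⌈(K : ℝ) ^ 2 / c⌉ : ℝ) + K) / (dirIndepNum V E : ℝ)) + 2 := by
  set α : ℝ := ((dirIndepNum V E : ℕ) : ℝ)
  set M : ℝ := ((⌈(K : ℝ) ^ 2 / c⌉ : ℤ) : ℝ)
  rcases le_or_gt K 1 with hK1 | hK1
  · -- For `K ≤ 1` the discretization fails (it needs `K + 1 ≤ K ^ 2`), but the sum is at most `K`.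
    have hlog : 0 ≤ 2 * α * Real.log (1 + (M + K) / α) :=
      mul_nonneg (by positivity) (Real.log_nonneg (le_add_of_nonneg_right (by positivity)))
    have hKR : (K : ℝ) ≤ 1 := by exact_mod_cast hK1
    linarith [hK ▸ sum_div_le_card E hnn hc]
  have : Nonempty V := Fintype.card_pos_iff.mp (by omega)
  have hKR : (2 : ℝ) ≤ K := by exact_mod_cast hK1
  have hcM : (K : ℝ) + 1 ≤ M * c := by
    have := (div_le_iff₀ hc).mp (Int.le_ceil ((K : ℝ) ^ 2 / c))
    nlinarith
  have hmain := sum_div_le_two_mul_log E hnn hsum.le hc (hK ▸ hcM)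
    (Nat.cast_pos.mpr (one_le_dirIndepNum E)) fun _ hT => Nat.cast_le.mpr (card_le_dirIndepNum hT)
  rw [hK] at hmain
  linarith
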